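/- arXiv:1509.04701 — 6 statements merged into one kernel-verified Lean document; each statement's English description precedes it below -/
import Mathlib

section
/- Let G be a connected graph with 2r vertices such that every maximal matching of G has size r (i.e., every maximal matching is perfect). Then G has no cutvertex, i.e., G is 2-connected (for r ≥ 2). -/
/-!
If `G - v` is disconnected, let `S` be the vertex set of one of its components; since `G` is
connected, `v` has a neighbour `w ∈ S` and a neighbour `w' ∉ S`. Extend `vw` and `vw'` to maximal,
hence perfect, matchings. In a perfect matching containing `vu`, every vertex of `S \ {u}` is
matched inside `S \ {u}`, so `|S \ {u}|` is even. For `u = w'` this says `|S|` is even, for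
`u = w` that `|S| - 1` is even.
-/

open SimpleGraph

/-- A matching of a simple graph, given as a set of edges: each edge belongs to the
graph, and distinct edges of the matching share no vertex. -/
def EdgeMatching {V : Type*} (G : SimpleGraph V) (M : Set (Sym2 V)) : Prop :=
  M ⊆ G.edgeSet ∧ ∀ e ∈ M, ∀ f ∈ M, e ≠ f → ∀ v : V, v ∈ e → v ∉ f

/-- The set of vertices covered by a set of edges. -/
def mCover {V : Type*} (M : Set (Sym2 V)) : Set V := {v | ∃ e ∈ M, v ∈ e}

/-- A maximal matching: a matching to which no edge of the graph can be added. -/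
def MaximalEdgeMatching {V : Type*} (G : SimpleGraph V) (M : Set (Sym2 V)) : Prop :=
  EdgeMatching G M ∧ ∀ e ∈ G.edgeSet, EdgeMatching G (insert e M) → e ∈ M

namespace EdgeMatching

variable {V : Type*} {G : SimpleGraph V} {M N : Set (Sym2 V)}

lemma mono (h : M ⊆ N) (hN : EdgeMatching G N) : EdgeMatching G M :=
  ⟨h.trans hN.1, fun e he f hf => hN.2 e (h he) f (h hf)⟩

lemma eq_of_mem_of_mem (hM : EdgeMatching G M) {e f : Sym2 V} (he : e ∈ M) (hf : f ∈ M)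
    {x : V} (hxe : x ∈ e) (hxf : x ∈ f) : e = f :=
  not_not.mp fun hne => hM.2 e he f hf hne x hxe hxf

lemma ncard_mCover [Finite V] (hM : EdgeMatching G M) : (mCover M).ncard = 2 * M.ncard := by
  have hcover : mCover M = ⋃ e ∈ M, {x | x ∈ e} := by ext; simp [mCover]
  have hdisj : M.PairwiseDisjoint fun e => {x | x ∈ e} := fun e he f hf hne =>
    Set.disjoint_left.mpr fun x hxe hxf => hM.2 e he f hf hne x hxe hxf
  have hpair : ∀ e ∈ M, {x | x ∈ e}.ncard = 2 := by
    intro e he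
    induction e with
    | h a b =>
      have hab : a ≠ b := by simpa using G.not_isDiag_of_mem_edgeSet (hM.1 he)
      rw [show {x | x ∈ s(a, b)} = {a, b} by ext; simp, Set.ncard_pair hab]
  rw [hcover, (Set.toFinite M).ncard_biUnion (fun _ _ => Set.toFinite _) hdisj,
    finsum_mem_congr rfl hpair, finsum_mem_eq_finite_toFinset_sum _ (Set.toFinite M),
    Finset.sum_const, smul_eq_mul, Set.ncard_eq_toFinset_card M, mul_comm]

lemma mCover_eq_univ [Fintype V] (hM : EdgeMatching G M) (hcard : Fintype.card V = 2 * M.ncard) :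
    mCover M = Set.univ :=
  Set.eq_of_subset_of_ncard_le (Set.subset_univ _)
    (by rw [Set.ncard_univ, Nat.card_eq_fintype_card, hcard, hM.ncard_mCover]) (Set.toFinite _)

lemma even_ncard_of_subset_mCover [Finite V] (hM : EdgeMatching G M) {T : Set V}
    (hT : T ⊆ mCover M) (hclosed : ∀ e ∈ M, ∀ x ∈ e, x ∈ T → ∀ y ∈ e, y ∈ T) :
    Even T.ncard := by
  have hcover : mCover {e ∈ M | ∀ x ∈ e, x ∈ T} = T := by
    refine subset_antisymm (fun x ⟨e, ⟨_, he⟩, hx⟩ => he x hx) fun x hx => ?_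
    obtain ⟨e, he, hxe⟩ := hT hx
    exact ⟨e, ⟨he, hclosed e he x hxe hx⟩, hxe⟩
  rw [← hcover, (hM.mono (Set.sep_subset _ _)).ncard_mCover]
  exact even_two_mul _

lemma even_ncard_diff_of_mem [Finite V] (hM : EdgeMatching G M) (hcov : mCover M = Set.univ)
    {v w : V} (hvw : s(v, w) ∈ M) {S : Set V} (hvS : v ∉ S)
    (hS : ∀ y ∈ S, ∀ z, G.Adj y z → z ≠ v → z ∈ S) : Even (S \ {w}).ncard := by
  refine hM.even_ncard_of_subset_mCover (hcov ▸ Set.subset_univ _) ?_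
  rintro e he x hxe ⟨hxS, hxw⟩ y hye
  have hne : e ≠ s(v, w) := by
    rintro rfl
    rcases Sym2.mem_iff.mp hxe with rfl | rfl
    exacts [hvS hxS, hxw rfl]
  have hyv : y ≠ v := fun h => hne (hM.eq_of_mem_of_mem he hvw (h ▸ hye) (Sym2.mem_mk_left v w))
  have hyw : y ≠ w := fun h => hne (hM.eq_of_mem_of_mem he hvw (h ▸ hye) (Sym2.mem_mk_right v w))
  obtain rfl | hxy := eq_or_ne y x
  · exact ⟨hxS, hxw⟩
  have hadj : G.Adj x y := by
    rw [← G.mem_edgeSet, ← (Sym2.mem_and_mem_iff hxy.symm).mp ⟨hxe, hye⟩]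
    exact hM.1 he
  exact ⟨hS x hxS y hadj hyv, hyw⟩

end EdgeMatching

section

variable {V : Type*} {G : SimpleGraph V}

lemma exists_maximalEdgeMatching_mem [Finite V] {e : Sym2 V} (he : e ∈ G.edgeSet) :
    ∃ M, MaximalEdgeMatching G M ∧ e ∈ M := by
  have hsingleton : EdgeMatching G {e} :=
    ⟨Set.singleton_subset_iff.mpr he, fun a ha b hb hab => absurd (ha.trans hb.symm) hab⟩
  obtain ⟨M, ⟨hM, heM⟩, hmax⟩ :=
    (Set.toFinite {M | EdgeMatching G M ∧ e ∈ M}).exists_maximal ⟨{e}, hsingleton, rfl⟩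
  refine ⟨M, ⟨hM, fun f _ hf => ?_⟩, heM⟩
  exact hmax ⟨hf, Set.mem_insert_of_mem _ heM⟩ (Set.subset_insert f M) (Set.mem_insert f M)

lemma SimpleGraph.Reachable.exists_adj_reachable_induce_ne {x c : V} (h : G.Reachable x c)
    (hx : x ≠ c) : ∃ y : {u | u ≠ c}, G.Adj c y ∧ (G.induce {u | u ≠ c}).Reachable ⟨x, hx⟩ y := by
  obtain ⟨p⟩ := h
  induction p with
  | nil => exact absurd rfl hx
  | @cons x z c hxz q ih =>
    by_cases hz : z = c
    · subst hz
      exact ⟨⟨x, hx⟩, hxz.symm, .refl _⟩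
    · obtain ⟨y, hcy, hzy⟩ := ih hz
      have hxz' : (G.induce {u | u ≠ c}).Adj ⟨x, hx⟩ ⟨z, hz⟩ := by simpa using hxz
      exact ⟨y, hcy, hxz'.reachable.trans hzy⟩

lemma SimpleGraph.Connected.exists_closed_set_separating_neighbors [Nontrivial V]
    (hconn : G.Connected) {v : V} (hv : ¬(G.induce {x | x ≠ v}).Connected) :
    ∃ S : Set V, v ∉ S ∧ (∀ y ∈ S, ∀ z, G.Adj y z → z ≠ v → z ∈ S) ∧
      (∃ w ∈ S, G.Adj v w) ∧ ∃ w ∉ S, G.Adj v w := by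
  obtain ⟨u, hu⟩ := exists_ne v
  have : Nonempty {x | x ≠ v} := ⟨⟨u, hu⟩⟩
  simp only [connected_iff, Preconnected, and_iff_left this, not_forall] at hv
  obtain ⟨a, b, hab⟩ := hv
  refine ⟨{y | ∃ h : y ≠ v, (G.induce {x | x ≠ v}).Reachable b ⟨y, h⟩}, fun ⟨h, _⟩ => h rfl,
    ?_, ?_, ?_⟩
  · rintro y ⟨hy, hby⟩ z hyz hz
    have hyz' : (G.induce {x | x ≠ v}).Adj ⟨y, hy⟩ ⟨z, hz⟩ := by simpa using hyz
    exact ⟨hz, hby.trans hyz'.reachable⟩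
  · obtain ⟨w, hvw, hbw⟩ := (hconn.preconnected b v).exists_adj_reachable_induce_ne b.2
    exact ⟨w, ⟨w.2, hbw⟩, hvw⟩
  · obtain ⟨w, hvw, haw⟩ := (hconn.preconnected a v).exists_adj_reachable_induce_ne a.2
    exact ⟨w, fun ⟨_, hbw⟩ => hab (haw.trans hbw.symm), hvw⟩

end

theorem no_cutvertex_of_all_maximal_matchings_perfect_general {V : Type*} [Fintype V]
    (G : SimpleGraph V) (r : ℕ) (hcard : Fintype.card V = 2 * r)
    (hconn : G.Connected)
    (hmax : ∀ M : Set (Sym2 V), MaximalEdgeMatching G M → M.ncard = r) :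
    ∀ v : V, (G.induce {x : V | x ≠ v}).Connected := by
  intro v
  by_contra hv
  have : Nontrivial V := Fintype.one_lt_card_iff_nontrivial.mp <| by
    have := Fintype.card_pos_iff.mpr ⟨v⟩
    omega
  obtain ⟨S, hvS, hS, ⟨w, hwS, hvw⟩, ⟨w', hw'S, hvw'⟩⟩ :=
    hconn.exists_closed_set_separating_neighbors hv
  have hperfect : ∀ {u}, G.Adj v u → ∃ M, EdgeMatching G M ∧ mCover M = Set.univ ∧ s(v, u) ∈ M :=
    fun hvu =>
      let ⟨M, hM, hvuM⟩ := exists_maximalEdgeMatching_mem (G.mem_edgeSet.mpr hvu)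
      ⟨M, hM.1, hM.1.mCover_eq_univ (by rw [hcard, hmax M hM]), hvuM⟩
  obtain ⟨M, hM, hcov, hvwM⟩ := hperfect hvw
  obtain ⟨M', hM', hcov', hvw'M'⟩ := hperfect hvw'
  have heven : Even S.ncard := by
    simpa [Set.sdiff_singleton_eq_self hw'S] using hM'.even_ncard_diff_of_mem hcov' hvw'M' hvS hS
  rw [← Set.ncard_sdiff_singleton_add_one hwS (Set.toFinite _), Nat.even_add_one] at heven
  exact heven (hM.even_ncard_diff_of_mem hcov hvwM hvS hS)

/-- a connected graph on 2r vertices (r ≥ 2) in which every maximal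
matching has size r has no cutvertex. -/
theorem no_cutvertex_of_all_maximal_matchings_perfect {V : Type*} [Fintype V]
    (G : SimpleGraph V) (r : ℕ) (hr : 2 ≤ r) (hcard : Fintype.card V = 2 * r)
    (hconn : G.Connected)
    (hmax : ∀ M : Set (Sym2 V), MaximalEdgeMatching G M → M.ncard = r) :
    ∀ v : V, (G.induce {x : V | x ≠ v}).Connected :=
  no_cutvertex_of_all_maximal_matchings_perfect_general G r hcard hconn hmax
end

section
/- Let G be a connected graph with a cutvertex v. Then G has a maximal matching that is not a perfect matching. Equivalently, if every maximal matching of a connected graph G on an even number of vertices is perfect, then G has no cutvertex. -/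
open SimpleGraph

/-! Let `S` be the vertex set of a component of `G - v`; since `G` is connected, `v` has a
neighbour `u₁ ∈ S` and a neighbour `u₂ ∉ S`. Extend the edge `v u₂` (if `|S|` is odd) or
`v u₁` (if `|S|` is even) to a maximal matching `M`, and let `T` be `S`, respectively `S ∪ {v}`,
a set of odd size. No edge of `G - v` leaves `T`, and the edge of `M` at `v` lies inside or
outside `T`, so if `M` were perfect the edges of `M` inside `T` would cover `T`, forcing `|T|`
to be even. -/

section

variable {V : Type*} {G : SimpleGraph V}

theorem EdgeMatching.mono_s2 {M N : Set (Sym2 V)} (hN : EdgeMatching G N) (hMN : M ⊆ N) :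
    EdgeMatching G M :=
  ⟨hMN.trans hN.1, fun e he f hf => hN.2 e (hMN he) f (hMN hf)⟩

theorem edgeMatching_singleton {v u : V} (h : G.Adj v u) : EdgeMatching G {s(v, u)} :=
  ⟨Set.singleton_subset_iff.2 h, fun _ he _ hf hef => absurd (he.trans hf.symm) hef⟩

theorem EdgeMatching.ncard_mCover_s2 [Finite V] {M : Set (Sym2 V)} (hM : EdgeMatching G M) :
    (mCover M).ncard = 2 * M.ncard := by
  classical
  have := Fintype.ofFinite V
  have hcover : mCover M = ↑(M.toFinset.biUnion fun e => e.toFinset) := by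
    ext x; simp [mCover]
  have hdisj : (M.toFinset : Set (Sym2 V)).PairwiseDisjoint fun e => e.toFinset := by
    intro e he f hf hef
    simpa [Finset.disjoint_left] using hM.2 e (by simpa using he) f (by simpa using hf) hef
  have hcard : ∀ e ∈ M.toFinset, e.toFinset.card = 2 := fun e he =>
    Sym2.card_toFinset_of_not_isDiag e (G.not_isDiag_of_mem_edgeSet (hM.1 (by simpa using he)))
  rw [hcover, Set.ncard_coe_finset, Finset.card_biUnion hdisj, Finset.sum_congr rfl hcard,
    Finset.sum_const, smul_eq_mul, Set.ncard_eq_toFinset_card' M, mul_comm]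

theorem EdgeMatching.even_ncard_of_forall_mem [Finite V] {M : Set (Sym2 V)}
    (hM : EdgeMatching G M) {T : Set V}
    (hT : ∀ x ∈ T, ∃ e ∈ M, x ∈ e ∧ ∀ y ∈ e, y ∈ T) : Even T.ncard := by
  set MT := {e ∈ M | ∀ y ∈ e, y ∈ T}
  have hcover : mCover MT = T := by
    ext x
    exact ⟨fun ⟨e, he, hx⟩ => he.2 x hx, fun hx => by
      obtain ⟨e, he, hxe, heT⟩ := hT x hx; exact ⟨e, ⟨he, heT⟩, hxe⟩⟩
  rw [← hcover, (hM.mono_s2 (Set.sep_subset _ _)).ncard_mCover_s2]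
  exact even_two_mul _

theorem exists_maximalEdgeMatching_superset [Finite V] {M₀ : Set (Sym2 V)}
    (h : EdgeMatching G M₀) : ∃ M, M₀ ⊆ M ∧ MaximalEdgeMatching G M := by
  obtain ⟨M, ⟨hM, hM₀⟩, hmax⟩ :=
    (Set.toFinite {M | EdgeMatching G M ∧ M₀ ⊆ M}).exists_maximal ⟨M₀, h, subset_rfl⟩
  refine ⟨M, hM₀, hM, fun e _ hins => ?_⟩
  have hsub : M ⊆ insert e M := Set.subset_insert e M
  exact hmax ⟨hins, hM₀.trans hsub⟩ hsub (Set.mem_insert e M)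

theorem EdgeMatching.even_ncard_of_mCover_eq_univ [Finite V] {M : Set (Sym2 V)}
    (hM : EdgeMatching G M) (hcov : mCover M = Set.univ) {v u : V} (hvu : s(v, u) ∈ M)
    {T : Set V} (hT : ∀ x ∈ T, ∀ y, G.Adj x y → x ≠ v → y ≠ v → y ∈ T)
    (huT : u ∈ T ↔ v ∈ T) : Even T.ncard := by
  refine hM.even_ncard_of_forall_mem fun x hx => ?_
  obtain ⟨e, he, hxe⟩ : x ∈ mCover M := hcov ▸ Set.mem_univ x
  refine ⟨e, he, hxe, ?_⟩
  by_cases hev : e = s(v, u)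
  · subst hev
    have : v ∈ T := by rcases Sym2.mem_iff.1 hxe with rfl | rfl <;> tauto
    intro y hy
    rcases Sym2.mem_iff.1 hy with rfl | rfl <;> tauto
  · have hve : v ∉ e := hM.2 _ hvu _ he (Ne.symm hev) v (Sym2.mem_mk_left v u)
    obtain ⟨y, rfl⟩ := Sym2.mem_iff_exists.1 hxe
    intro z hz
    rcases Sym2.mem_iff.1 hz with rfl | rfl
    · exact hx
    · exact hT x hx z (hM.1 he) (fun h => hve (h ▸ Sym2.mem_mk_left _ _))
        (fun h => hve (h ▸ Sym2.mem_mk_right _ _))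

theorem exists_maximalEdgeMatching_mCover_ne_univ [Finite V] {v u : V} (h : G.Adj v u)
    {T : Set V} (hT : ∀ x ∈ T, ∀ y, G.Adj x y → x ≠ v → y ≠ v → y ∈ T)
    (huT : u ∈ T ↔ v ∈ T) (hodd : Odd T.ncard) :
    ∃ M : Set (Sym2 V), MaximalEdgeMatching G M ∧ mCover M ≠ Set.univ := by
  obtain ⟨M, hvuM, hM⟩ := exists_maximalEdgeMatching_superset (edgeMatching_singleton h)
  exact ⟨M, hM, fun hcov => Nat.not_even_iff_odd.2 hodd <|
    hM.1.even_ncard_of_mCover_eq_univ hcov (Set.singleton_subset_iff.1 hvuM) hT huT⟩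

theorem exists_adj_mem_of_reachable {S : Set V} {a v : V} (hav : G.Reachable a v)
    (ha : a ∈ S) (hv : v ∉ S) (hS : ∀ x ∈ S, ∀ y, G.Adj x y → y ≠ v → y ∈ S) :
    ∃ u ∈ S, G.Adj v u := by
  obtain ⟨p⟩ := hav
  obtain ⟨d, -, hd₁, hd₂⟩ := p.exists_boundary_dart S ha hv
  have : d.snd = v := by_contra (hd₂ <| hS _ hd₁ _ d.adj ·)
  exact ⟨d.fst, hd₁, this ▸ d.adj.symm⟩

theorem mem_image_reachable_induce_of_adj {s : Set V} {a : s} {x y : V}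
    (hx : x ∈ Subtype.val '' {z | (G.induce s).Reachable a z}) (hxy : G.Adj x y) (hy : y ∈ s) :
    y ∈ Subtype.val '' {z | (G.induce s).Reachable a z} := by
  obtain ⟨x, hax, rfl⟩ := hx
  exact ⟨⟨y, hy⟩, hax.trans (SimpleGraph.Adj.reachable (G := G.induce s) hxy), rfl⟩

theorem exists_separation_of_not_connected_induce (hconn : G.Connected) {v a : V}
    (ha : a ≠ v) (hcut : ¬ (G.induce {x | x ≠ v}).Connected) :
    ∃ S : Set V, v ∉ S ∧ (∀ x ∈ S, ∀ y, G.Adj x y → y ≠ v → y ∈ S) ∧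
      (∃ u ∈ S, G.Adj v u) ∧ ∃ u ∉ S, G.Adj v u := by
  have : Nonempty {x | x ≠ v} := ⟨⟨a, ha⟩⟩
  obtain ⟨a, b, hab⟩ : ∃ a b, ¬ (G.induce {x | x ≠ v}).Reachable a b := by
    by_contra! h
    exact hcut ⟨h⟩
  let comp (c : {x | x ≠ v}) := Subtype.val '' {z | (G.induce {x | x ≠ v}).Reachable c z}
  have hclosed (c) : ∀ x ∈ comp c, ∀ y, G.Adj x y → y ≠ v → y ∈ comp c :=
    fun x hx y hxy hy => mem_image_reachable_induce_of_adj hx hxy hy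
  have hv (c) : v ∉ comp c := fun ⟨z, _, hz⟩ => z.2 hz
  have hnbr (c : {x | x ≠ v}) : ∃ u ∈ comp c, G.Adj v u :=
    exists_adj_mem_of_reachable (hconn.preconnected c v) ⟨c, .rfl, rfl⟩ (hv c) (hclosed c)
  obtain ⟨u, ⟨z, hbz, rfl⟩, hvu⟩ := hnbr b
  refine ⟨comp a, hv a, hclosed a, hnbr a, z, ?_, hvu⟩
  rintro ⟨z', haz, hz⟩
  exact hab (haz.trans (Subtype.ext hz ▸ hbz.symm))

end

/-- a connected graph (on at least 3 vertices) with a cutvertex has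
a maximal matching that is not perfect. -/
theorem exists_nonperfect_maximal_matching_of_cutvertex {V : Type*} [Fintype V]
    (G : SimpleGraph V) (hcard : 3 ≤ Fintype.card V) (hconn : G.Connected)
    (v : V) (hcut : ¬ (G.induce {x : V | x ≠ v}).Connected) :
    ∃ M : Set (Sym2 V), MaximalEdgeMatching G M ∧ mCover M ≠ Set.univ := by
  obtain ⟨a, ha⟩ := Fintype.exists_ne_of_one_lt_card (by omega) v
  obtain ⟨S, hvS, hS, ⟨u₁, hu₁S, hvu₁⟩, u₂, hu₂S, hvu₂⟩ :=
    exists_separation_of_not_connected_induce hconn ha hcut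
  rcases Nat.even_or_odd S.ncard with heven | hodd
  · have hodd : Odd (insert v S).ncard := by
      rw [Set.ncard_insert_of_notMem hvS]
      exact heven.add_one
    refine exists_maximalEdgeMatching_mCover_ne_univ hvu₁ ?_
      (iff_of_true (.inr hu₁S) (.inl rfl)) hodd
    rintro x (rfl | hx) y hxy hxv hyv
    · exact absurd rfl hxv
    · exact .inr (hS x hx y hxy hyv)
  · exact exists_maximalEdgeMatching_mCover_ne_univ hvu₂
      (fun x hx y hxy _ hyv => hS x hx y hxy hyv) (iff_of_false hu₂S hvS) hodd
end

section
/- Let G be a connected graph on 2r vertices, r ≥ 2, such that every maximal matching of G is perfect. Then for every edge vw of G, the graph G − {v, w} is connected. -/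
open SimpleGraph

/-!
Every matching of a graph in which all maximal matchings are perfect extends to a perfect
matching, and a perfect matching restricted to a vertex set closed under it has even size.
Let `K` be a union of components of `G - {v, w}`. The perfect matching through `vw` shows that
`|K|` is even, so no perfect matching runs through `vc` and `wd` with `c ∈ K`, `d ∉ K`: it would
leave `K \ {c}` closed. If `G - {v, w}` split into disjoint nonempty such `K` and `L`, both
would have neighbours in `{v, w}` since `G` is connected. Neighbours at different ends give a
forbidden pair directly; if `c ∈ K` and `d ∈ L` are both adjacent to `v`, the partner of `w` in
a perfect matching through `vc` lies outside `K` or outside `L`, giving one.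
-/

section

variable {V : Type*} {G : SimpleGraph V}

/-- Sumner's randomly matchable graphs. -/
def RandomlyMatchable (G : SimpleGraph V) : Prop :=
  ∀ M : Set (Sym2 V), MaximalEdgeMatching G M → mCover M = Set.univ

/-- `K` is a union of connected components of `G - T`. -/
def IsCutOffBy (G : SimpleGraph V) (T K : Set V) : Prop :=
  Disjoint K T ∧ ∀ ⦃x y⦄, x ∈ K → G.Adj x y → y ∈ K ∨ y ∈ T

section Matching

variable {M : Set (Sym2 V)}

lemma edgeMatching_singleton_s3 {a b : V} (hab : G.Adj a b) : EdgeMatching G {s(a, b)} := by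
  refine ⟨by simpa using hab, ?_⟩
  rintro e rfl f rfl hef
  exact absurd rfl hef

lemma edgeMatching_pair {a b c d : V} (hab : G.Adj a b) (hcd : G.Adj c d)
    (hac : a ≠ c) (had : a ≠ d) (hbc : b ≠ c) (hbd : b ≠ d) :
    EdgeMatching G {s(a, b), s(c, d)} := by
  refine ⟨by simp [Set.insert_subset_iff, hab, hcd], ?_⟩
  simp only [Set.mem_insert_iff, Set.mem_singleton_iff]
  rintro e (rfl | rfl) f (rfl | rfl) hef p hpe hpf <;> aesop

lemma EdgeMatching.eq_of_mk_mem (hM : EdgeMatching G M) {x y z : V}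
    (hy : s(x, y) ∈ M) (hz : s(x, z) ∈ M) : y = z := by
  by_contra hne
  exact hM.2 _ hy _ hz (mt Sym2.congr_right.mp hne) x (Sym2.mem_mk_left x y)
    (Sym2.mem_mk_left x z)

lemma exists_mk_mem_of_mCover_eq_univ (hcov : mCover M = Set.univ) (x : V) :
    ∃ y, s(x, y) ∈ M := by
  obtain ⟨e, he, hxe⟩ : x ∈ mCover M := hcov ▸ Set.mem_univ x
  obtain ⟨y, rfl⟩ := Sym2.mem_iff_exists.mp hxe
  exact ⟨y, he⟩

lemma EdgeMatching.exists_maximal_superset [Finite V] (hM : EdgeMatching G M) :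
    ∃ M', MaximalEdgeMatching G M' ∧ M ⊆ M' := by
  obtain ⟨M', ⟨hM', hsub⟩, hmax⟩ :=
    Set.Finite.exists_maximalFor id {N | EdgeMatching G N ∧ M ⊆ N} (Set.toFinite _)
      ⟨M, hM, subset_rfl⟩
  refine ⟨M', ⟨hM', fun e _ hins => ?_⟩, hsub⟩
  exact hmax ⟨hins, hsub.trans (Set.subset_insert _ _)⟩ (Set.subset_insert _ _)
    (Set.mem_insert _ _)

lemma RandomlyMatchable.exists_perfect_superset [Finite V] (hG : RandomlyMatchable G)
    (hM : EdgeMatching G M) :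
    ∃ M', M ⊆ M' ∧ EdgeMatching G M' ∧ mCover M' = Set.univ := by
  obtain ⟨M', hmax, hsub⟩ := hM.exists_maximal_superset
  exact ⟨M', hsub, hmax.1, hG M' hmax⟩

/-- A perfect matching restricts to a perfect matching of any vertex set closed under it. -/
lemma EdgeMatching.even_ncard_of_closed [Finite V] (hM : EdgeMatching G M)
    (hcov : mCover M = Set.univ) {K : Set V} (hK : ∀ ⦃x y⦄, s(x, y) ∈ M → x ∈ K → y ∈ K) :
    Even K.ncard := by
  classical
  have := Fintype.ofFinite V
  let H : G.Subgraph :=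
    { verts := K
      Adj := fun x y => x ∈ K ∧ s(x, y) ∈ M
      adj_sub := fun h => hM.1 h.2
      edge_vert := fun h => h.1
      symm := ⟨fun x y h => ⟨hK h.2 h.1, Sym2.eq_swap ▸ h.2⟩⟩ }
  have hH : H.IsMatching := fun x hx => by
    obtain ⟨y, hy⟩ := exists_mk_mem_of_mCover_eq_univ hcov x
    exact ⟨y, ⟨hx, hy⟩, fun z hz => hM.eq_of_mk_mem hz.2 hy⟩
  simpa [Set.ncard_eq_toFinset_card'] using hH.even_card

end Matching

section Components

variable {T K L : Set V}

lemma IsCutOffBy.exists_adj_mem (hK : IsCutOffBy G T K) (hG : G.Preconnected) {x y : V}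
    (hx : x ∈ K) (hy : y ∉ K) : ∃ c ∈ K, ∃ t ∈ T, G.Adj c t := by
  obtain ⟨d, -, hd, hd'⟩ := (hG x y).some.exists_boundary_dart K hx hy
  exact ⟨d.fst, hd, d.snd, (hK.2 hd d.adj).resolve_left hd', d.adj⟩

lemma isCutOffBy_image_val {C : Set (Tᶜ : Set V)}
    (hC : ∀ ⦃x y⦄, (G.induce Tᶜ).Adj x y → x ∈ C → y ∈ C) :
    IsCutOffBy G T (Subtype.val '' C) := by
  refine ⟨Set.disjoint_left.mpr ?_, ?_⟩
  · rintro _ ⟨x, -, rfl⟩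
    exact x.2
  · rintro _ y ⟨x, hx, rfl⟩ hxy
    by_cases hyT : y ∈ T
    · exact Or.inr hyT
    · exact Or.inl ⟨⟨y, hyT⟩, hC hxy hx, rfl⟩

lemma preconnected_induce_compl_of_isCutOffBy
    (h : ∀ K L, IsCutOffBy G T K → IsCutOffBy G T L → K.Nonempty → L.Nonempty →
      ¬ Disjoint K L) :
    (G.induce Tᶜ).Preconnected := by
  intro a b
  by_contra hab
  refine h (Subtype.val '' {x | (G.induce Tᶜ).Reachable a x})
    (Subtype.val '' {x | ¬ (G.induce Tᶜ).Reachable a x})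
    (isCutOffBy_image_val fun x y hxy hx => hx.trans hxy.reachable)
    (isCutOffBy_image_val fun x y hxy hx hy => hx (hy.trans hxy.symm.reachable))
    ⟨a, a, Reachable.rfl, rfl⟩ ⟨b, b, hab, rfl⟩ ?_
  rw [Set.disjoint_image_iff Subtype.val_injective]
  exact Set.disjoint_left.mpr fun x hx hx' => hx' hx

end Components

section Parity

variable [Finite V] {v w c d : V} {K L : Set V}

lemma IsCutOffBy.even_ncard (hG : RandomlyMatchable G) (hvw : G.Adj v w)
    (hK : IsCutOffBy G {v, w} K) : Even K.ncard := by
  obtain ⟨M, hsub, hM, hcov⟩ := hG.exists_perfect_superset (edgeMatching_singleton_s3 hvw)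
  have hvwM : s(v, w) ∈ M := hsub rfl
  refine hM.even_ncard_of_closed hcov fun x y hxy hx => ?_
  have hxT : x ∉ ({v, w} : Set V) := Set.disjoint_left.mp hK.1 hx
  refine (hK.2 hx (hM.1 hxy)).resolve_right ?_
  rintro (rfl | rfl)
  · exact hxT (.inr (hM.eq_of_mk_mem (Sym2.eq_swap ▸ hxy) hvwM))
  · exact hxT (.inl (hM.eq_of_mk_mem (Sym2.eq_swap ▸ hxy) (Sym2.eq_swap ▸ hvwM)))

/-- A perfect matching through `vc` and `wd` would make `K \ {c}` closed under it, so both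
`|K|` and `|K| - 1` would be even. -/
lemma IsCutOffBy.not_adj_of_adj (hG : RandomlyMatchable G) (hvw : G.Adj v w)
    (hK : IsCutOffBy G {v, w} K) (hc : c ∈ K) (hd : d ∉ K) (hdT : d ∉ ({v, w} : Set V))
    (hvc : G.Adj v c) : ¬ G.Adj w d := by
  intro hwd
  have hcT : c ∉ ({v, w} : Set V) := Set.disjoint_left.mp hK.1 hc
  obtain ⟨M, hsub, hM, hcov⟩ := hG.exists_perfect_superset
    (edgeMatching_pair hvc hwd hvw.ne (by grind) (by grind) (by grind))
  have hvcM : s(v, c) ∈ M := hsub (by simp)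
  have hwdM : s(w, d) ∈ M := hsub (by simp)
  have heven : Even (K \ {c}).ncard := by
    refine hM.even_ncard_of_closed hcov fun x y hxy ⟨hxK, hxc⟩ => ?_
    have hxT : x ∉ ({v, w} : Set V) := Set.disjoint_left.mp hK.1 hxK
    rcases hK.2 hxK (hM.1 hxy) with hyK | rfl | rfl
    · refine ⟨hyK, fun hyc => ?_⟩
      subst hyc
      exact hxT (.inl (hM.eq_of_mk_mem (Sym2.eq_swap ▸ hxy) (Sym2.eq_swap ▸ hvcM)))
    · exact absurd (hM.eq_of_mk_mem (Sym2.eq_swap ▸ hxy) hvcM) hxc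
    · exact absurd (hM.eq_of_mk_mem (Sym2.eq_swap ▸ hxy) hwdM ▸ hxK) hd
  have hcard := Set.ncard_sdiff_singleton_add_one hc (Set.toFinite K)
  have := hK.even_ncard hG hvw
  grind

lemma IsCutOffBy.not_adj_of_disjoint (hG : RandomlyMatchable G) (hvw : G.Adj v w)
    (hK : IsCutOffBy G {v, w} K) (hL : IsCutOffBy G {v, w} L) (hKL : Disjoint K L)
    (hc : c ∈ K) (hd : d ∈ L) (hvc : G.Adj v c) {t : V} (ht : t ∈ ({v, w} : Set V)) :
    ¬ G.Adj t d := by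
  rcases (ht : t = v ∨ t = w) with ht | ht <;> subst t
  · intro hvd
    obtain ⟨M, hsub, hM, hcov⟩ := hG.exists_perfect_superset (edgeMatching_singleton_s3 hvc)
    obtain ⟨y, hwy⟩ := exists_mk_mem_of_mCover_eq_univ hcov w
    have hwy' : G.Adj w y := hM.1 hwy
    have hyT : y ∉ ({v, w} : Set V) := by
      rintro (rfl | rfl)
      · have hwc := hM.eq_of_mk_mem (Sym2.eq_swap ▸ hwy) (hsub rfl)
        exact Set.disjoint_left.mp hK.1 (hwc ▸ hc) (by simp)
      · exact hwy'.ne rfl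
    by_cases hyK : y ∈ K
    · exact hL.not_adj_of_adj hG hvw hd (Set.disjoint_left.mp hKL hyK) hyT hvd hwy'
    · exact hK.not_adj_of_adj hG hvw hc hyK hyT hvc hwy'
  · exact hK.not_adj_of_adj hG hvw hc (Set.disjoint_right.mp hKL hd)
      (Set.disjoint_left.mp hL.1 hd) hvc

lemma RandomlyMatchable.not_disjoint_of_isCutOffBy (hG : RandomlyMatchable G)
    (hconn : G.Preconnected) (hvw : G.Adj v w) (hK : IsCutOffBy G {v, w} K)
    (hL : IsCutOffBy G {v, w} L) (hKne : K.Nonempty) (hLne : L.Nonempty) : ¬ Disjoint K L := by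
  intro hKL
  have hvK : v ∉ K := fun h => Set.disjoint_left.mp hK.1 h (by simp)
  have hvL : v ∉ L := fun h => Set.disjoint_left.mp hL.1 h (by simp)
  obtain ⟨c, hc, t, ht, hct⟩ := hK.exists_adj_mem hconn hKne.some_mem hvK
  obtain ⟨d, hd, t', ht', hdt'⟩ := hL.exists_adj_mem hconn hLne.some_mem hvL
  rcases (ht : t = v ∨ t = w) with ht | ht <;> subst t
  · exact hK.not_adj_of_disjoint hG hvw hL hKL hc hd hct.symm ht' hdt'.symm
  · rw [Set.pair_comm] at hK hL ht'
    exact hK.not_adj_of_disjoint hG hvw.symm hL hKL hc hd hct.symm ht' hdt'.symm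

end Parity

end

/-- in a connected graph on 2r vertices (r ≥ 2) in which every maximal
matching is perfect, removing the two endpoints of any edge leaves a connected graph. -/
theorem removing_edge_endpoints_connected {V : Type*} [Fintype V]
    (G : SimpleGraph V) (r : ℕ) (hr : 2 ≤ r) (hcard : Fintype.card V = 2 * r)
    (hconn : G.Connected)
    (hmax : ∀ M : Set (Sym2 V), MaximalEdgeMatching G M → mCover M = Set.univ) :
    ∀ v w : V, G.Adj v w → (G.induce {x : V | x ≠ v ∧ x ≠ w}).Connected := by
  classical
  intro v w hvw
  have hS : {x : V | x ≠ v ∧ x ≠ w} = ({v, w} : Set V)ᶜ := by ext; simp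
  obtain ⟨x, -, hx⟩ := Finset.exists_mem_notMem_of_card_lt_card (s := {v, w})
    (t := Finset.univ) (by grind [Finset.card_le_two, Finset.card_univ])
  rw [hS, connected_iff]
  exact ⟨preconnected_induce_compl_of_isCutOffBy fun K L hK hL =>
      RandomlyMatchable.not_disjoint_of_isCutOffBy hmax hconn.preconnected hvw hK hL,
    ⟨x, by simpa using hx⟩⟩
end

section
/- Let G be a graph on an even number of vertices, and suppose some edge vw of G is such that G − {v, w} has a connected component with an odd number of vertices. Then G has a maximal matching that is not perfect. -/
open SimpleGraph

lemma even_ncard_of_involution {α : Type*} (f : α → α) (n : ℕ) :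
    ∀ (s : Set α), s.Finite → s.ncard = n → (∀ a ∈ s, f a ∈ s) → (∀ a ∈ s, f (f a) = a) →
    (∀ a ∈ s, f a ≠ a) → Even s.ncard := by
  induction n using Nat.strong_induction_on with
  | _ n ih =>
    intro s hfin hcard hmem hinv hne
    rcases s.eq_empty_or_nonempty with rfl | ⟨a, ha⟩
    · simp
    · have hfa : f a ∈ s := hmem a ha
      have hfane : f a ≠ a := hne a ha
      set s' := s \ {a, f a} with hs'
      have hsub : s' ⊆ s := Set.diff_subset
      have hfin' : s'.Finite := hfin.subset hsub
      have hpair : ({a, f a} : Set α) ⊆ s := by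
        intro x hx; rcases hx with rfl | rfl <;> assumption
      have hpaircard : ({a, f a} : Set α).ncard = 2 := by
        rw [Set.ncard_pair (Ne.symm hfane)]
      have hcard' : s'.ncard = s.ncard - 2 := by
        rw [hs', Set.ncard_diff hpair, hpaircard]
      have hge : 2 ≤ s.ncard := by
        have := Set.ncard_le_ncard hpair hfin
        omega
      have hmem' : ∀ b ∈ s', f b ∈ s' := by
        intro b hb
        obtain ⟨hbs, hbne⟩ := hb
        refine ⟨hmem b hbs, ?_⟩
        intro hmem2
        rcases hmem2 with h1 | h1
        · apply hbne; right
          rw [← hinv b hbs, h1]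
          rfl
        · apply hbne; left
          have : f (f b) = f (f a) := by rw [h1]
          rwa [hinv b hbs, hinv a ha] at this
      have hlt : s.ncard - 2 < n := by omega
      have heven' : Even s'.ncard := by
        refine ih (s.ncard - 2) (by omega) s' hfin' hcard' hmem' ?_ ?_
        · intro b hb; exact hinv b (hsub hb)
        · intro b hb; exact hne b (hsub hb)
      rw [hcard'] at heven'
      obtain ⟨k, hk⟩ := heven'
      exact ⟨k + 1, by omega⟩

lemma sUnion_edgeMatching {V : Type*} (G : SimpleGraph V) (c : Set (Set (Sym2 V)))
    (hc : ∀ M ∈ c, EdgeMatching G M) (hchain : IsChain (· ⊆ ·) c) :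
    EdgeMatching G (⋃₀ c) := by
  constructor
  · intro e he
    obtain ⟨M, hM, heM⟩ := he
    exact (hc M hM).1 heM
  · rintro e ⟨M1, hM1, he⟩ f ⟨M2, hM2, hf⟩ hne x hxe
    rcases eq_or_ne M1 M2 with rfl | hMne
    · exact (hc M1 hM1).2 e he f hf hne x hxe
    · rcases hchain hM1 hM2 hMne with h | h
      · exact (hc M2 hM2).2 e (h he) f hf hne x hxe
      · exact (hc M1 hM1).2 e he f (h hf) hne x hxe

/-- if G has an even number of vertices and some edge vw is such that
G − {v,w} has an odd connected component, then G has a non-perfect maximal matching. -/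
theorem exists_nonperfect_maximal_matching_of_odd_component {V : Type*} [Fintype V]
    (G : SimpleGraph V) (heven : Even (Fintype.card V))
    (v w : V) (hvw : G.Adj v w)
    (hodd : ∃ c : (G.induce {x : V | x ≠ v ∧ x ≠ w}).ConnectedComponent,
      Odd c.supp.ncard) :
    ∃ M : Set (Sym2 V), MaximalEdgeMatching G M ∧ mCover M ≠ Set.univ := by
  classical
  obtain ⟨c, hodd⟩ := hodd
  have he0m : EdgeMatching G {s(v, w)} := by
    constructor
    · intro e he; simp only [Set.mem_singleton_iff] at he; subst he
      exact hvw
    · intro e he f hf hne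
      simp only [Set.mem_singleton_iff] at he hf
      exact absurd (he.trans hf.symm) hne
  have hS : ∀ c' ⊆ {M : Set (Sym2 V) | EdgeMatching G M}, IsChain (· ⊆ ·) c' → c'.Nonempty →
      ∃ ub ∈ {M : Set (Sym2 V) | EdgeMatching G M}, ∀ s ∈ c', s ⊆ ub := by
    intro c' hc' hchain _
    exact ⟨⋃₀ c', sUnion_edgeMatching G c' hc' hchain,
      fun s hs => Set.subset_sUnion_of_mem hs⟩
  obtain ⟨M, hsub, hmax⟩ :=
    zorn_subset_nonempty {M : Set (Sym2 V) | EdgeMatching G M} hS {s(v, w)} he0m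
  have hMmatch : EdgeMatching G M := hmax.1
  have he0M : s(v, w) ∈ M := hsub rfl
  have huniq : ∀ e ∈ M, ∀ f ∈ M, ∀ x : V, x ∈ e → x ∈ f → e = f := by
    intro e he f hf x hxe hxf
    by_contra hne
    exact hMmatch.2 e he f hf hne x hxe hxf
  refine ⟨M, ⟨hMmatch, ?_⟩, ?_⟩
  · intro e he hins
    exact hmax.2 hins (Set.subset_insert e M) (Set.mem_insert e M)
  · intro hcov
    -- every vertex of the odd component is matched to another vertex of the same component
    have key : ∀ u : {x : V | x ≠ v ∧ x ≠ w}, u ∈ c.supp →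
        ∃ u' : {x : V | x ≠ v ∧ x ≠ w}, u' ∈ c.supp ∧ u' ≠ u ∧ s(u.1, u'.1) ∈ M := by
      intro u hu
      have hcu : (u : V) ∈ mCover M := by rw [hcov]; trivial
      obtain ⟨e, heM, hue⟩ := hcu
      obtain ⟨b, rfl⟩ := Sym2.mem_iff_exists.mp hue
      have hadj : G.Adj u.1 b := hMmatch.1 heM
      have hne0 : s(u.1, b) ≠ s(v, w) := by
        intro h
        rcases Sym2.eq_iff.mp h with ⟨h1, _⟩ | ⟨h1, _⟩
        · exact u.2.1 h1
        · exact u.2.2 h1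
      have hbv : b ≠ v := by
        rintro rfl
        exact hMmatch.2 _ heM _ he0M hne0 b (by simp) (by simp)
      have hbw : b ≠ w := by
        rintro rfl
        exact hMmatch.2 _ heM _ he0M hne0 b (by simp) (by simp)
      have hbu : b ≠ u.1 := hadj.ne'
      refine ⟨⟨b, hbv, hbw⟩, ?_, ?_, heM⟩
      · have hadj' : (G.induce {x : V | x ≠ v ∧ x ≠ w}).Adj u ⟨b, hbv, hbw⟩ := hadj
        rw [ConnectedComponent.mem_supp_iff] at hu ⊢
        rw [← hu]
        exact ConnectedComponent.sound hadj'.symm.reachable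
      · intro h
        exact hbu (congrArg Subtype.val h)
    -- build the partner function
    set f : {x : V | x ≠ v ∧ x ≠ w} → {x : V | x ≠ v ∧ x ≠ w} :=
      fun u => if h : u ∈ c.supp then (key u h).choose else u with hf
    have hfmem : ∀ u ∈ c.supp, f u ∈ c.supp := by
      intro u hu
      simp only [hf, dif_pos hu]
      exact (key u hu).choose_spec.1
    have hfne : ∀ u ∈ c.supp, f u ≠ u := by
      intro u hu
      simp only [hf, dif_pos hu]
      exact (key u hu).choose_spec.2.1
    have hfedge : ∀ u (hu : u ∈ c.supp), s(u.1, (f u).1) ∈ M := by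
      intro u hu
      simp only [hf, dif_pos hu]
      exact (key u hu).choose_spec.2.2
    have hfinv : ∀ u ∈ c.supp, f (f u) = u := by
      intro u hu
      have h1 : s(u.1, (f u).1) ∈ M := hfedge u hu
      have hfu : f u ∈ c.supp := hfmem u hu
      have h2 : s((f u).1, (f (f u)).1) ∈ M := hfedge (f u) hfu
      have heq : s(u.1, (f u).1) = s((f u).1, (f (f u)).1) :=
        huniq _ h1 _ h2 (f u).1 (by simp) (by simp)
      rcases Sym2.eq_iff.mp heq with ⟨h3, _⟩ | ⟨h3, _⟩
      · exact absurd (Subtype.ext h3).symm (hfne u hu)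
      · exact (Subtype.ext h3).symm
    have heven : Even c.supp.ncard :=
      even_ncard_of_involution f c.supp.ncard c.supp (Set.toFinite _) rfl hfmem hfinv hfne
    exact Nat.not_even_iff_odd.mpr hodd heven
end

section
/- Let G be a connected graph on 2r vertices, r ≥ 3, such that every maximal matching of G is perfect and G − {u, v} is isomorphic to K_{r-1,r-1} for every edge uv. Then G is isomorphic to K_{r,r}. -/
open SimpleGraph

section Aux

lemma cbg_adj_iff {α β : Type*} (z w : α ⊕ β) :
    (completeBipartiteGraph α β).Adj z w ↔ z.isLeft ≠ w.isLeft := by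
  cases z <;> cases w <;> simp [completeBipartiteGraph]

lemma bool3 : ∀ x y z : Bool, x ≠ z → y ≠ z → x = y := by decide

lemma bool4 : ∀ x y z : Bool, x ≠ z → y ≠ x → y = z := by decide

/-- Extract a two-coloring of `V \ {u,v}` from an isomorphism of the deleted graph
with a balanced complete bipartite graph. -/
lemma sides_of_iso {V : Type*} [Fintype V] (G : SimpleGraph V) {m : ℕ} (u v : V)
    (f : (G.induce {x : V | x ≠ u ∧ x ≠ v}) ≃g completeBipartiteGraph (Fin m) (Fin m)) :
    ∃ F : V → Bool,
      (∀ x y, x ≠ u → x ≠ v → y ≠ u → y ≠ v → (G.Adj x y ↔ F x ≠ F y)) ∧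
      {x : V | (x ≠ u ∧ x ≠ v) ∧ F x = true}.ncard = m ∧
      {x : V | (x ≠ u ∧ x ≠ v) ∧ F x = false}.ncard = m := by
  classical
  set S : Set V := {x : V | x ≠ u ∧ x ≠ v} with hS
  refine ⟨fun x => if h : x ∈ S then (f ⟨x, h⟩).isLeft else true, ?_, ?_, ?_⟩
  · intro x y hxu hxv hyu hyv
    have hx : x ∈ S := ⟨hxu, hxv⟩
    have hy : y ∈ S := ⟨hyu, hyv⟩
    simp only [dif_pos hx, dif_pos hy]
    rw [← cbg_adj_iff (f ⟨x, hx⟩) (f ⟨y, hy⟩), f.map_rel_iff]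
    simp [comap_adj]
  · have h1 : {x : V | (x ≠ u ∧ x ≠ v) ∧ (if h : x ∈ S then (f ⟨x, h⟩).isLeft else true) = true}
        = Subtype.val '' (f.toEquiv.symm '' {z : Fin m ⊕ Fin m | z.isLeft = true}) := by
      ext x
      simp only [Set.mem_setOf_eq, Set.mem_image]
      constructor
      · rintro ⟨hx, hleft⟩
        rw [dif_pos (show x ∈ S from hx)] at hleft
        exact ⟨⟨x, hx⟩, ⟨f.toEquiv ⟨x, hx⟩, hleft, f.toEquiv.symm_apply_apply _⟩, rfl⟩
      · rintro ⟨⟨x', hx'⟩, ⟨z, hz, hzx⟩, rfl⟩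
        refine ⟨hx', ?_⟩
        rw [dif_pos hx']
        have hz2 : f.toEquiv ⟨x', hx'⟩ = z := by
          rw [← hzx, Equiv.apply_symm_apply]
        exact hz2 ▸ hz
    rw [h1, Set.ncard_image_of_injective _ Subtype.val_injective,
      Set.ncard_image_of_injective _ f.toEquiv.symm.injective]
    have h2 : {z : Fin m ⊕ Fin m | z.isLeft = true} = Set.range Sum.inl := by
      ext z; cases z <;> simp
    rw [h2, ← Set.image_univ, Set.ncard_image_of_injective _ Sum.inl_injective,
      Set.ncard_univ]
    simp
  · have h1 : {x : V | (x ≠ u ∧ x ≠ v) ∧ (if h : x ∈ S then (f ⟨x, h⟩).isLeft else true) = false}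
        = Subtype.val '' (f.toEquiv.symm '' {z : Fin m ⊕ Fin m | z.isLeft = false}) := by
      ext x
      simp only [Set.mem_setOf_eq, Set.mem_image]
      constructor
      · rintro ⟨hx, hleft⟩
        rw [dif_pos (show x ∈ S from hx)] at hleft
        exact ⟨⟨x, hx⟩, ⟨f.toEquiv ⟨x, hx⟩, hleft, f.toEquiv.symm_apply_apply _⟩, rfl⟩
      · rintro ⟨⟨x', hx'⟩, ⟨z, hz, hzx⟩, rfl⟩
        refine ⟨hx', ?_⟩
        rw [dif_pos hx']
        have hz2 : f.toEquiv ⟨x', hx'⟩ = z := by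
          rw [← hzx, Equiv.apply_symm_apply]
        exact hz2 ▸ hz
    rw [h1, Set.ncard_image_of_injective _ Subtype.val_injective,
      Set.ncard_image_of_injective _ f.toEquiv.symm.injective]
    have h2 : {z : Fin m ⊕ Fin m | z.isLeft = false} = Set.range Sum.inr := by
      ext z; cases z <;> simp
    rw [h2, ← Set.image_univ, Set.ncard_image_of_injective _ Sum.inr_injective,
      Set.ncard_univ]
    simp

/-- If the vertex set is partitioned into two halves of size `r` with adjacency exactly
across the partition, the graph is `K_{r,r}`. -/
lemma iso_of_partition {V : Type*} [Fintype V] (G : SimpleGraph V) (r : ℕ)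
    (A : Set V) (hA : A.ncard = r) (hAc : Aᶜ.ncard = r)
    (hadj : ∀ x y, G.Adj x y ↔ ((x ∈ A ∧ y ∉ A) ∨ (x ∉ A ∧ y ∈ A))) :
    Nonempty (G ≃g completeBipartiteGraph (Fin r) (Fin r)) := by
  classical
  have eA : ↥A ≃ Fin r :=
    Finite.equivFinOfCardEq (by rw [Nat.card_coe_set_eq]; exact hA)
  have eB : ↥(Aᶜ) ≃ Fin r :=
    Finite.equivFinOfCardEq (by rw [Nat.card_coe_set_eq]; exact hAc)
  refine ⟨⟨(Equiv.Set.sumCompl A).symm.trans (Equiv.sumCongr eA eB), ?_⟩⟩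
  intro x y
  show (completeBipartiteGraph (Fin r) (Fin r)).Adj _ _ ↔ _
  rw [hadj]
  by_cases hx : x ∈ A <;> by_cases hy : y ∈ A
  · simp [Equiv.Set.sumCompl_symm_apply_of_mem hx, Equiv.Set.sumCompl_symm_apply_of_mem hy,
      hx, hy, completeBipartiteGraph]
  · simp [Equiv.Set.sumCompl_symm_apply_of_mem hx, Equiv.Set.sumCompl_symm_apply_of_notMem hy,
      hx, hy, completeBipartiteGraph]
  · simp [Equiv.Set.sumCompl_symm_apply_of_notMem hx, Equiv.Set.sumCompl_symm_apply_of_mem hy,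
      hx, hy, completeBipartiteGraph]
  · simp [Equiv.Set.sumCompl_symm_apply_of_notMem hx, Equiv.Set.sumCompl_symm_apply_of_notMem hy,
      hx, hy, completeBipartiteGraph]

/-- The four adjacency facts for the pair `u, v` relative to the deleted edge `a, b`. -/
def Quad {V : Type*} (G : SimpleGraph V) (u v : V) (A B : Set V) (a b : V) : Prop :=
  (∀ b' ∈ B, b' ≠ b → G.Adj u b') ∧ (∀ a' ∈ A, a' ≠ a → ¬G.Adj u a') ∧
  (∀ a' ∈ A, a' ≠ a → G.Adj v a') ∧ (∀ b' ∈ B, b' ≠ b → ¬G.Adj v b')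

lemma main_aux {V : Type*} [Fintype V] (G : SimpleGraph V) (r : ℕ) (hr : 3 ≤ r)
    (u v : V) (huv : G.Adj u v) (A B : Set V)
    (hUnion : ∀ x, x = u ∨ x = v ∨ x ∈ A ∨ x ∈ B)
    (huA : u ∉ A) (huB : u ∉ B) (hvA : v ∉ A) (hvB : v ∉ B)
    (hABdisj : ∀ x, x ∈ A → x ∈ B → False)
    (hAcard : A.ncard = r - 1) (hBcard : B.ncard = r - 1)
    (hAB : ∀ a ∈ A, ∀ b ∈ B, G.Adj a b)
    (hAA : ∀ a ∈ A, ∀ a' ∈ A, ¬G.Adj a a')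
    (hBB : ∀ b ∈ B, ∀ b' ∈ B, ¬G.Adj b b')
    (huBadj : ∀ b ∈ B, G.Adj u b)
    (huAadj : ∀ a ∈ A, ¬G.Adj u a)
    (hvAadj : ∀ a ∈ A, G.Adj v a)
    (hvBadj : ∀ b ∈ B, ¬G.Adj v b) :
    Nonempty (G ≃g completeBipartiteGraph (Fin r) (Fin r)) := by
  classical
  have hvu : v ≠ u := huv.ne'
  have m_u : u ∈ insert u A := Set.mem_insert _ _
  have m_a : ∀ a ∈ A, a ∈ insert u A := fun a ha => Set.mem_insert_of_mem _ ha
  have n_v : v ∉ insert u A := by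
    simp only [Set.mem_insert_iff]
    rintro (h | h)
    · exact hvu h
    · exact hvA h
  have n_b : ∀ b ∈ B, b ∉ insert u A := by
    intro b hb
    simp only [Set.mem_insert_iff]
    rintro (rfl | h)
    · exact huB hb
    · exact hABdisj b h hb
  have hcompl : (insert u A)ᶜ = insert v B := by
    ext x
    simp only [Set.mem_compl_iff, Set.mem_insert_iff, not_or]
    constructor
    · rintro ⟨hxu, hxA⟩
      rcases hUnion x with h | h | h | h
      · exact absurd h hxu
      · exact Or.inl h
      · exact absurd h hxA
      · exact Or.inr h
    · rintro (rfl | hxB)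
      · exact ⟨hvu, hvA⟩
      · exact ⟨fun h => huB (h ▸ hxB), fun h => hABdisj x h hxB⟩
  apply iso_of_partition G r (insert u A)
  · rw [Set.ncard_insert_of_notMem huA]
    omega
  · rw [hcompl, Set.ncard_insert_of_notMem hvB]
    omega
  · intro x y
    rcases hUnion x with rfl | rfl | hx | hx <;> rcases hUnion y with rfl | rfl | hy | hy
    · exact iff_of_false (G.irrefl) (by tauto)
    · exact iff_of_true huv (Or.inl ⟨m_u, n_v⟩)
    · exact iff_of_false (huAadj _ hy) (by have := m_a _ hy; tauto)
    · exact iff_of_true (huBadj _ hy) (Or.inl ⟨m_u, n_b _ hy⟩)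
    · exact iff_of_true huv.symm (Or.inr ⟨n_v, m_u⟩)
    · exact iff_of_false (G.irrefl) (by tauto)
    · exact iff_of_true (hvAadj _ hy) (Or.inr ⟨n_v, m_a _ hy⟩)
    · exact iff_of_false (hvBadj _ hy) (by have := n_v; have := n_b _ hy; tauto)
    · exact iff_of_false (fun h => huAadj _ hx h.symm) (by have := m_a _ hx; tauto)
    · exact iff_of_true (hvAadj _ hx).symm (Or.inl ⟨m_a _ hx, n_v⟩)
    · exact iff_of_false (hAA _ hx _ hy) (by have := m_a _ hx; have := m_a _ hy; tauto)
    · exact iff_of_true (hAB _ hx _ hy) (Or.inl ⟨m_a _ hx, n_b _ hy⟩)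
    · exact iff_of_true (huBadj _ hx).symm (Or.inr ⟨n_b _ hx, m_u⟩)
    · exact iff_of_false (fun h => hvBadj _ hx h.symm) (by have := n_b _ hx; have := n_v; tauto)
    · exact iff_of_true (hAB _ hy _ hx).symm (Or.inr ⟨n_b _ hx, m_a _ hy⟩)
    · exact iff_of_false (hBB _ hx _ hy) (by have := n_b _ hx; have := n_b _ hy; tauto)

lemma dichotomy {V : Type*} (G : SimpleGraph V)
    (u v : V) (huv : G.Adj u v) (A B : Set V)
    (hSA : ∀ a ∈ A, a ≠ u ∧ a ≠ v) (hSB : ∀ b ∈ B, b ≠ u ∧ b ≠ v)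
    (hABdisj : ∀ x, x ∈ A → x ∈ B → False)
    (hAcard : 1 < A.ncard) (hBcard : 1 < B.ncard)
    (hAB : ∀ a ∈ A, ∀ b ∈ B, G.Adj a b)
    (hAA : ∀ a ∈ A, ∀ a' ∈ A, ¬G.Adj a a')
    (a : V) (ha : a ∈ A) (b : V) (hb : b ∈ B)
    (F : V → Bool)
    (hF : ∀ x y, x ≠ a → x ≠ b → y ≠ a → y ≠ b → (G.Adj x y ↔ F x ≠ F y)) :
    Quad G u v A B a b ∨ Quad G v u A B a b := by
  obtain ⟨a', ha', ha'a⟩ := Set.exists_ne_of_one_lt_ncard hAcard a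
  obtain ⟨b', hb', hb'b⟩ := Set.exists_ne_of_one_lt_ncard hBcard b
  have hAne : ∀ p ∈ A, p ≠ b := fun p hp h => hABdisj p hp (h ▸ hb)
  have hBne : ∀ q ∈ B, q ≠ a := fun q hq h => hABdisj q (h ▸ ha) hq
  have hu_a : u ≠ a := fun h => (hSA a ha).1 h.symm
  have hu_b : u ≠ b := fun h => (hSB b hb).1 h.symm
  have hv_a : v ≠ a := fun h => (hSA a ha).2 h.symm
  have hv_b : v ≠ b := fun h => (hSB b hb).2 h.symm
  have hadjF : ∀ q ∈ B, q ≠ b → F a' ≠ F q := fun q hq hqb =>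
    (hF a' q ha'a (hAne a' ha') (hBne q hq) hqb).mp (hAB a' ha' q hq)
  have hsame : ∀ p ∈ A, p ≠ a → F p = F a' := by
    intro p hp hpa
    by_contra h
    exact hAA p hp a' ha' ((hF p a' hpa (hAne p hp) ha'a (hAne a' ha')).mpr h)
  have huvF : F u ≠ F v := (hF u v hu_a hu_b hv_a hv_b).mp huv
  have key : ∀ w, w ≠ a → w ≠ b → F w = F a' →
      (∀ q ∈ B, q ≠ b → G.Adj w q) ∧ (∀ p ∈ A, p ≠ a → ¬G.Adj w p) := by
    intro w hwa hwb hw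
    constructor
    · intro q hq hqb
      exact (hF w q hwa hwb (hBne q hq) hqb).mpr (by rw [hw]; exact hadjF q hq hqb)
    · intro p hp hpa hAdj
      exact (hF w p hwa hwb hpa (hAne p hp)).mp hAdj (hw.trans (hsame p hp hpa).symm)
  have key2 : ∀ w, w ≠ a → w ≠ b → F w ≠ F a' →
      (∀ p ∈ A, p ≠ a → G.Adj w p) ∧ (∀ q ∈ B, q ≠ b → ¬G.Adj w q) := by
    intro w hwa hwb hw
    constructor
    · intro p hp hpa
      exact (hF w p hwa hwb hpa (hAne p hp)).mpr (fun h => hw (h.trans (hsame p hp hpa)))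
    · intro q hq hqb hAdj
      exact (hF w q hwa hwb (hBne q hq) hqb).mp hAdj
        (bool3 _ _ (F a') hw (fun h => hadjF q hq hqb h.symm))
  by_cases hc : F u = F a'
  · have hvc : F v ≠ F a' := fun h => huvF (hc.trans h.symm)
    obtain ⟨k1, k2⟩ := key u hu_a hu_b hc
    obtain ⟨k3, k4⟩ := key2 v hv_a hv_b hvc
    exact Or.inl ⟨k1, k2, k3, k4⟩
  · have hvc : F v = F a' := bool4 (F u) (F v) (F a') hc (fun h => huvF h.symm)
    obtain ⟨k1, k2⟩ := key v hv_a hv_b hvc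
    obtain ⟨k3, k4⟩ := key2 u hu_a hu_b hc
    exact Or.inr ⟨k1, k2, k3, k4⟩

lemma finish2 {V : Type*} [Fintype V] (G : SimpleGraph V) (r : ℕ) (hr : 3 ≤ r)
    (u v : V) (huv : G.Adj u v) (A B : Set V)
    (hUnion : ∀ x, x = u ∨ x = v ∨ x ∈ A ∨ x ∈ B)
    (huA : u ∉ A) (huB : u ∉ B) (hvA : v ∉ A) (hvB : v ∉ B)
    (hABdisj : ∀ x, x ∈ A → x ∈ B → False)
    (hAcard : A.ncard = r - 1) (hBcard : B.ncard = r - 1)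
    (hAB : ∀ a ∈ A, ∀ b ∈ B, G.Adj a b)
    (hAA : ∀ a ∈ A, ∀ a' ∈ A, ¬G.Adj a a')
    (hBB : ∀ b ∈ B, ∀ b' ∈ B, ¬G.Adj b b')
    (a₀ : V) (ha₀ : a₀ ∈ A) (a₁ : V) (ha₁ : a₁ ∈ A) (ha01 : a₁ ≠ a₀)
    (b₀ : V) (hb₀ : b₀ ∈ B) (b₁ : V) (hb₁ : b₁ ∈ B) (hb01 : b₁ ≠ b₀)
    (hdich : ∀ a ∈ A, ∀ b ∈ B, Quad G u v A B a b ∨ Quad G v u A B a b)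
    (h1 : Quad G u v A B a₀ b₀) :
    Nonempty (G ≃g completeBipartiteGraph (Fin r) (Fin r)) := by
  obtain ⟨h11, h12, h13, h14⟩ := h1
  have h2 : Quad G u v A B a₀ b₁ := by
    rcases hdich a₀ ha₀ b₁ hb₁ with h | h
    · exact h
    · exact absurd (h.2.2.1 a₁ ha₁ ha01) (h12 a₁ ha₁ ha01)
  have h3 : Quad G u v A B a₁ b₀ := by
    rcases hdich a₁ ha₁ b₀ hb₀ with h | h
    · exact h
    · exact absurd (h11 b₁ hb₁ hb01) (h.2.2.2 b₁ hb₁ hb01)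
  apply main_aux G r hr u v huv A B hUnion huA huB hvA hvB hABdisj hAcard hBcard hAB hAA hBB
  · intro b hb
    by_cases h : b = b₀
    · exact h2.1 b hb (by rw [h]; exact hb01.symm)
    · exact h11 b hb h
  · intro a ha
    by_cases h : a = a₀
    · exact h3.2.1 a ha (by rw [h]; exact ha01.symm)
    · exact h12 a ha h
  · intro a ha
    by_cases h : a = a₀
    · exact h3.2.2.1 a ha (by rw [h]; exact ha01.symm)
    · exact h13 a ha h
  · intro b hb
    by_cases h : b = b₀
    · exact h2.2.2.2 b hb (by rw [h]; exact hb01.symm)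
    · exact h14 b hb h

end Aux

/-- a connected graph on 2r vertices (r ≥ 3) where every maximal
matching is perfect and G − {u,v} ≅ K_{r-1,r-1} for every edge uv is itself
isomorphic to K_{r,r}. -/
theorem iso_completeBipartite_of_deletions {V : Type*} [Fintype V]
    (G : SimpleGraph V) (r : ℕ) (hr : 3 ≤ r) (hcard : Fintype.card V = 2 * r)
    (hconn : G.Connected)
    (hmax : ∀ M : Set (Sym2 V), MaximalEdgeMatching G M → mCover M = Set.univ)
    (hbip : ∀ u v : V, G.Adj u v → Nonempty
      ((G.induce {x : V | x ≠ u ∧ x ≠ v}) ≃g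
        completeBipartiteGraph (Fin (r - 1)) (Fin (r - 1)))) :
    Nonempty (G ≃g completeBipartiteGraph (Fin r) (Fin r)) := by
  classical
  have h1card : 1 < Fintype.card V := by omega
  obtain ⟨x₀, y₀, hxy⟩ := Fintype.exists_pair_of_one_lt_card h1card
  obtain ⟨u, v, huv⟩ : ∃ u v : V, G.Adj u v := by
    obtain ⟨w⟩ := hconn x₀ y₀
    cases w with
    | nil => exact absurd rfl hxy
    | cons h _ => exact ⟨_, _, h⟩
  obtain ⟨f⟩ := hbip u v huv
  obtain ⟨F, hF, hcT, hcF⟩ := sides_of_iso G u v f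
  set A := {x : V | (x ≠ u ∧ x ≠ v) ∧ F x = true} with hAdef
  set B := {x : V | (x ≠ u ∧ x ≠ v) ∧ F x = false} with hBdef
  have hSA : ∀ a ∈ A, a ≠ u ∧ a ≠ v := fun a ha => ha.1
  have hSB : ∀ b ∈ B, b ≠ u ∧ b ≠ v := fun b hb => hb.1
  have hUnion : ∀ x, x = u ∨ x = v ∨ x ∈ A ∨ x ∈ B := by
    intro x
    by_cases h1 : x = u
    · exact Or.inl h1
    by_cases h2 : x = v
    · exact Or.inr (Or.inl h2)
    cases hFx : F x
    · exact Or.inr (Or.inr (Or.inr ⟨⟨h1, h2⟩, hFx⟩))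
    · exact Or.inr (Or.inr (Or.inl ⟨⟨h1, h2⟩, hFx⟩))
  have huA : u ∉ A := fun h => h.1.1 rfl
  have huB : u ∉ B := fun h => h.1.1 rfl
  have hvA : v ∉ A := fun h => h.1.2 rfl
  have hvB : v ∉ B := fun h => h.1.2 rfl
  have hABdisj : ∀ x, x ∈ A → x ∈ B → False := by
    intro x h1 h2
    have := h1.2.symm.trans h2.2
    simp at this
  have hAB : ∀ a ∈ A, ∀ b ∈ B, G.Adj a b := by
    intro a ha b hb
    refine (hF a b ha.1.1 ha.1.2 hb.1.1 hb.1.2).mpr ?_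
    rw [ha.2, hb.2]
    simp
  have hAA : ∀ a ∈ A, ∀ a' ∈ A, ¬G.Adj a a' := by
    intro a ha a' ha' h
    have := (hF a a' ha.1.1 ha.1.2 ha'.1.1 ha'.1.2).mp h
    rw [ha.2, ha'.2] at this
    exact this rfl
  have hBB : ∀ b ∈ B, ∀ b' ∈ B, ¬G.Adj b b' := by
    intro b hb b' hb' h
    have := (hF b b' hb.1.1 hb.1.2 hb'.1.1 hb'.1.2).mp h
    rw [hb.2, hb'.2] at this
    exact this rfl
  have hAcard : A.ncard = r - 1 := hcT
  have hBcard : B.ncard = r - 1 := hcF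
  have h2A : 1 < A.ncard := by omega
  have h2B : 1 < B.ncard := by omega
  obtain ⟨a₀, ha₀, -⟩ := Set.exists_ne_of_one_lt_ncard h2A u
  obtain ⟨a₁, ha₁, ha01⟩ := Set.exists_ne_of_one_lt_ncard h2A a₀
  obtain ⟨b₀, hb₀, -⟩ := Set.exists_ne_of_one_lt_ncard h2B u
  obtain ⟨b₁, hb₁, hb01⟩ := Set.exists_ne_of_one_lt_ncard h2B b₀
  have hdich : ∀ a ∈ A, ∀ b ∈ B, Quad G u v A B a b ∨ Quad G v u A B a b := by
    intro a ha b hb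
    obtain ⟨g⟩ := hbip a b (hAB a ha b hb)
    obtain ⟨Fg, hFg, -, -⟩ := sides_of_iso G a b g
    exact dichotomy G u v huv A B hSA hSB hABdisj h2A h2B hAB hAA a ha b hb Fg hFg
  rcases hdich a₀ ha₀ b₀ hb₀ with h1 | h1
  · exact finish2 G r hr u v huv A B hUnion huA huB hvA hvB hABdisj hAcard hBcard hAB hAA hBB
      a₀ ha₀ a₁ ha₁ ha01 b₀ hb₀ b₁ hb₁ hb01 hdich h1
  · exact finish2 G r hr v u huv.symm A B
      (fun x => by rcases hUnion x with h | h | h | h <;> tauto)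
      hvA hvB huA huB hABdisj hAcard hBcard hAB hAA hBB
      a₀ ha₀ a₁ ha₁ ha01 b₀ hb₀ b₁ hb₁ hb01
      (fun a ha b hb => (hdich a ha b hb).symm) h1
end

section
/- Let G be a graph on 2r vertices, r ≥ 2, such that every maximal matching of G is perfect, and suppose G − {u, v} is a complete graph for some edge uv. If G is connected, then G − {x, y} is complete for every edge xy of G that shares a vertex with uv. -/
open SimpleGraph

/-- in a connected graph on 2r vertices (r ≥ 3) where every maximal
matching is perfect and deleting the endpoints of any edge gives K_{2(r-1)} or
K_{r-1,r-1}, if G − {u,v} is complete for some edge uv then G − {x,y} is complete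
for every edge xy sharing a vertex with uv. -/
theorem deletion_type_constant_on_adjacent_edges {V : Type*} [Fintype V]
    (G : SimpleGraph V) (r : ℕ) (hr : 3 ≤ r) (hcard : Fintype.card V = 2 * r)
    (hconn : G.Connected)
    (hmax : ∀ M : Set (Sym2 V), MaximalEdgeMatching G M → mCover M = Set.univ)
    (hdich : ∀ x y : V, G.Adj x y →
      Nonempty ((G.induce {a : V | a ≠ x ∧ a ≠ y}) ≃g
        (⊤ : SimpleGraph (Fin (2 * (r - 1))))) ∨
      Nonempty ((G.induce {a : V | a ≠ x ∧ a ≠ y}) ≃g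
        completeBipartiteGraph (Fin (r - 1)) (Fin (r - 1))))
    (u v : V) (huv : G.Adj u v)
    (hcomp : Nonempty ((G.induce {a : V | a ≠ u ∧ a ≠ v}) ≃g
      (⊤ : SimpleGraph (Fin (2 * (r - 1)))))) :
    ∀ x y : V, G.Adj x y → ({x, y} ∩ {u, v} : Set V).Nonempty →
      Nonempty ((G.induce {a : V | a ≠ x ∧ a ≠ y}) ≃g
        (⊤ : SimpleGraph (Fin (2 * (r - 1))))) := by
  classical
  intro x y hxy hshare
  rcases hdich x y hxy with h | h
  · exact h
  · exfalso
    obtain ⟨f⟩ := h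
    obtain ⟨e⟩ := hcomp
    -- bound the size of {x,y,u,v}
    have h3 : ∀ a b c : V, ({a, b, c} : Finset V).card ≤ 3 := by
      intro a b c
      refine (Finset.card_insert_le _ _).trans ?_
      have := (Finset.card_insert_le b ({c} : Finset V))
      simp at this ⊢
      omega
    have hScard : ({x, y, u, v} : Finset V).card ≤ 3 := by
      rcases hshare with ⟨w, hw1, hw2⟩
      simp only [Set.mem_insert_iff, Set.mem_singleton_iff] at hw1 hw2
      rcases hw1 with rfl | rfl <;> rcases hw2 with rfl | rfl
      · refine le_trans (Finset.card_le_card ?_) (h3 w y v)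
        intro z hz; simp at hz ⊢; tauto
      · refine le_trans (Finset.card_le_card ?_) (h3 w y u)
        intro z hz; simp at hz ⊢; tauto
      · refine le_trans (Finset.card_le_card ?_) (h3 x w v)
        intro z hz; simp at hz ⊢; tauto
      · refine le_trans (Finset.card_le_card ?_) (h3 x w u)
        intro z hz; simp at hz ⊢; tauto
    -- find three vertices outside {x,y,u,v}
    set T : Finset V := ({x, y, u, v} : Finset V)ᶜ with hT
    have hTcard : 2 < T.card := by
      have := Finset.card_compl ({x, y, u, v} : Finset V)
      rw [← hT] at this
      omega
    obtain ⟨a, ha, b, hb, c, hc, hab, hac, hbc⟩ := Finset.two_lt_card.mp hTcard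
    have hmem : ∀ z : V, z ∈ T → z ≠ x ∧ z ≠ y ∧ z ≠ u ∧ z ≠ v := by
      intro z hz
      simp [hT, Finset.mem_compl] at hz
      tauto
    obtain ⟨hax, hay, hau, hav⟩ := hmem a ha
    obtain ⟨hbx, hby, hbu, hbv⟩ := hmem b hb
    obtain ⟨hcx, hcy, hcu, hcv⟩ := hmem c hc
    -- adjacency from the complete graph G - {u,v}
    have hadjUV : ∀ p q : V, ∀ hp : p ≠ u ∧ p ≠ v, ∀ hq : q ≠ u ∧ q ≠ v,
        p ≠ q → G.Adj p q := by
      intro p q hp hq hpq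
      have hne : e ⟨p, hp⟩ ≠ e ⟨q, hq⟩ := by
        intro hEq
        exact hpq (congrArg Subtype.val (e.toEquiv.injective hEq))
      have htop : (⊤ : SimpleGraph (Fin (2 * (r - 1)))).Adj (e ⟨p, hp⟩) (e ⟨q, hq⟩) :=
        hne
      exact e.map_adj_iff.mp htop
    have hadjab : G.Adj a b := hadjUV a b ⟨hau, hav⟩ ⟨hbu, hbv⟩ hab
    have hadjac : G.Adj a c := hadjUV a c ⟨hau, hav⟩ ⟨hcu, hcv⟩ hac
    have hadjbc : G.Adj b c := hadjUV b c ⟨hbu, hbv⟩ ⟨hcu, hcv⟩ hbc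
    -- push the triangle through f into the bipartite graph
    have hAB := f.map_adj_iff.mpr
      (show (G.induce {z : V | z ≠ x ∧ z ≠ y}).Adj ⟨a, ⟨hax, hay⟩⟩ ⟨b, ⟨hbx, hby⟩⟩ from hadjab)
    have hAC := f.map_adj_iff.mpr
      (show (G.induce {z : V | z ≠ x ∧ z ≠ y}).Adj ⟨a, ⟨hax, hay⟩⟩ ⟨c, ⟨hcx, hcy⟩⟩ from hadjac)
    have hBC := f.map_adj_iff.mpr
      (show (G.induce {z : V | z ≠ x ∧ z ≠ y}).Adj ⟨b, ⟨hbx, hby⟩⟩ ⟨c, ⟨hcx, hcy⟩⟩ from hadjbc)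
    simp only [completeBipartiteGraph_adj] at hAB hAC hBC
    have key : ∀ s : Fin (r - 1) ⊕ Fin (r - 1),
        s.isLeft = true → s.isRight = true → False := by
      intro s h1 h2; cases s <;> simp at h1 h2
    rcases hAB with ⟨hA1, hB1⟩ | ⟨hA1, hB1⟩ <;>
      rcases hAC with ⟨hA2, hC1⟩ | ⟨hA2, hC1⟩ <;>
      rcases hBC with ⟨hB2, hC2⟩ | ⟨hB2, hC2⟩ <;>
      first
        | exact key _ hA1 hA2
        | exact key _ hA2 hA1
        | exact key _ hB1 hB2
        | exact key _ hB2 hB1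
        | exact key _ hC1 hC2
        | exact key _ hC2 hC1
end
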